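/- Let D = diag(λ₁,…,λₙ) be a diagonal n×n complex matrix with λ_k > 0 for all k and Σ_{k=1}^n λ_k = 1, let f₁, f₂ ∈ F_op satisfy f₁(0)/f₁(t) ≥ f₂(0)/f₂(t) for all t > 0, and let A⁽¹⁾,…,A⁽ᴺ⁾ be Hermitian n×n complex matrices. Then det(qCov^{s}_{D,f₁}) ≥ det(qCov^{as}_{D,f₂}), where qCov^{s}_{D,f} = Cov_{D,g_f^{s}} and qCov^{as}_{D,f} = Cov_{D,g_f^{as}}. -/

import Mathlib

/-! The kernels satisfy `g^{as}_{f₂} ≤ g^{as}_{f₁} ≤ g^{s}_{f₁}` pointwise, by the hypothesis on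
`f(0)/f` and `(x - y)² ≤ (x + y)²`. A covariance matrix with a nonnegative kernel is a Gram matrix,
so `qCov^{as}_{D,f₂} ≤ qCov^{s}_{D,f₁}` in the Loewner order, and the determinant is monotone there:
if `0 ≤ X ≤ Y = B* B` with `B` invertible, then `X = B* Z B` with `0 ≤ Z ≤ 1`, so the eigenvalues of
`Z` lie in `[0, 1]` and `det X = det Y · det Z ≤ det Y`. -/

open ComplexOrder Matrix

/-- The diagonal density matrix `D = diag(λ₁,…,λₙ)`. -/
noncomputable def Dmat {n : ℕ} (lam : Fin n → ℝ) : Matrix (Fin n) (Fin n) ℂ :=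
  Matrix.diagonal fun k => (lam k : ℂ)

/-- `A₀ = A - Tr(D A)·I`. -/
noncomputable def cent {n : ℕ} (lam : Fin n → ℝ) (A : Matrix (Fin n) (Fin n) ℂ) :
    Matrix (Fin n) (Fin n) ℂ :=
  A - (Dmat lam * A).trace • (1 : Matrix (Fin n) (Fin n) ℂ)

/-- The `N×N` covariance matrix `[Cov_{D,g}]_{ij} = (A⁽ⁱ⁾₀, A⁽ʲ⁾₀)_{D,g}` where
`(A,B)_{D,g} = Σ_{k,l} A_{lk}·B_{kl}·g(λ_k,λ_l)`. -/
noncomputable def covM {n N : ℕ} (lam : Fin n → ℝ) (g : ℝ → ℝ → ℝ)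
    (A : Fin N → Matrix (Fin n) (Fin n) ℂ) : Matrix (Fin N) (Fin N) ℂ :=
  Matrix.of fun i j =>
    ∑ k, ∑ l, (g (lam k) (lam l) : ℂ) * cent lam (A i) l k * cent lam (A j) k l
/-- `f ∈ F_op`: `f : (0,∞) → (0,∞)` is operator monotone (via the continuous functional
calculus on Hermitian matrices, with the Loewner order expressed through `PosSemidef`),
satisfies `f(x) = x·f(1/x)` for `x > 0`, and `f(1) = 1`. -/
structure IsFop (f : ℝ → ℝ) : Prop where
  pos : ∀ x : ℝ, 0 < x → 0 < f x
  opMono : ∀ (m : ℕ) (X Y : Matrix (Fin m) (Fin m) ℂ), X.PosSemidef → Y.PosSemidef →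
    (Y - X).PosSemidef → (cfc f Y - cfc f X).PosSemidef
  funcEq : ∀ x : ℝ, 0 < x → f x = x * f x⁻¹
  normalized : f 1 = 1

/-- `f(0) = lim_{t→0⁺} f(t)`. -/
def IsFzero (f : ℝ → ℝ) (f0 : ℝ) : Prop :=
  Filter.Tendsto f (nhdsWithin 0 (Set.Ioi 0)) (nhds f0)

/-- `m_f(x,y) = y·f(x/y)`. -/
noncomputable def mfun (f : ℝ → ℝ) (x y : ℝ) : ℝ := y * f (x / y)

/-- `g_cl(x,y) = (x+y)/2`. -/
noncomputable def gcl (x y : ℝ) : ℝ := (x + y) / 2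

/-- `g_f^{as}(x,y) = f(0)·(x−y)²/(2·m_f(x,y))`. -/
noncomputable def gas (f : ℝ → ℝ) (f0 : ℝ) (x y : ℝ) : ℝ :=
  f0 * (x - y) ^ 2 / (2 * mfun f x y)

/-- `g_f^{s}(x,y) = f(0)·(x+y)²/(2·m_f(x,y))`. -/
noncomputable def gs (f : ℝ → ℝ) (f0 : ℝ) (x y : ℝ) : ℝ :=
  f0 * (x + y) ^ 2 / (2 * mfun f x y)

namespace Matrix

variable {n 𝕜 : Type*} [Fintype n] [DecidableEq n] [RCLike 𝕜]

lemma IsHermitian.eigenvalues_le_one {Z : Matrix n n 𝕜} (hZ : Z.IsHermitian)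
    (h : (1 - Z).PosSemidef) (i : n) : hZ.eigenvalues i ≤ 1 := by
  set v := hZ.eigenvectorBasis i
  have hv : star v.ofLp ⬝ᵥ v.ofLp = 1 := by
    rw [dotProduct_comm, ← EuclideanSpace.inner_eq_star_dotProduct, inner_self_eq_norm_sq_to_K,
      hZ.eigenvectorBasis.orthonormal.1 i, RCLike.ofReal_one, one_pow]
  have hquad := h.re_dotProduct_nonneg v.ofLp
  rw [sub_mulVec, one_mulVec, dotProduct_sub, hv, map_sub, RCLike.one_re] at hquad
  linarith [hZ.eigenvalues_eq i]

lemma PosSemidef.det_le_one {Z : Matrix n n 𝕜} (hZ : Z.PosSemidef) (h : (1 - Z).PosSemidef) :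
    Z.det ≤ 1 := by
  rw [hZ.1.det_eq_prod_eigenvalues, ← RCLike.ofReal_prod, ← RCLike.ofReal_one,
    RCLike.ofReal_le_ofReal]
  exact Finset.prod_le_one (fun i _ => hZ.eigenvalues_nonneg i)
    (fun i _ => hZ.1.eigenvalues_le_one h i)

lemma PosSemidef.exists_eq_star_mul_self {Y : Matrix n n 𝕜} (hY : Y.PosSemidef) :
    ∃ B : Matrix n n 𝕜, Y = star B * B := by
  open scoped MatrixOrder in
  exact ⟨CFC.sqrt Y, by rw [(CFC.sqrt_nonneg Y).isSelfAdjoint.star_eq, CFC.sqrt_mul_sqrt_self Y]⟩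

lemma PosSemidef.det_eq_zero_of_le {X Y : Matrix n n 𝕜} (hX : X.PosSemidef)
    (hXY : (Y - X).PosSemidef) (hY : Y.det = 0) : X.det = 0 := by
  obtain ⟨v, hv0, hYv⟩ := exists_mulVec_eq_zero_iff.2 hY
  have hXv : star v ⬝ᵥ X *ᵥ v = 0 := by
    refine le_antisymm ?_ (hX.dotProduct_mulVec_nonneg v)
    simpa [sub_mulVec, hYv] using hXY.dotProduct_mulVec_nonneg v
  exact exists_mulVec_eq_zero_iff.1 ⟨v, hv0, (hX.dotProduct_mulVec_zero_iff v).1 hXv⟩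

theorem PosSemidef.det_le_det {X Y : Matrix n n 𝕜} (hX : X.PosSemidef)
    (hXY : (Y - X).PosSemidef) : X.det ≤ Y.det := by
  have hY : Y.PosSemidef := by simpa using hXY.add hX
  by_cases hY0 : Y.det = 0
  · rw [hX.det_eq_zero_of_le hXY hY0, hY0]
  obtain ⟨B, rfl⟩ := hY.exists_eq_star_mul_self
  have hB : IsUnit B := by
    rw [isUnit_iff_isUnit_det, isUnit_iff_ne_zero]
    rintro h
    simp [h] at hY0
  obtain ⟨Z, rfl⟩ : ∃ Z, X = star B * Z * B := by
    lift B to (Matrix n n 𝕜)ˣ using hB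
    refine ⟨star (↑B⁻¹ : Matrix n n 𝕜) * X * (↑B⁻¹ : Matrix n n 𝕜), ?_⟩
    rw [← mul_assoc, ← mul_assoc, ← star_mul, Units.inv_mul, star_one, one_mul, mul_assoc,
      Units.inv_mul, mul_one]
  have hZ : Z.PosSemidef := hB.posSemidef_star_left_conjugate_iff.1 hX
  have h1Z : (1 - Z).PosSemidef := by
    refine hB.posSemidef_star_left_conjugate_iff.1 ?_
    rwa [mul_sub, sub_mul, mul_one]
  calc (star B * Z * B).det = (star B * B).det * Z.det := by simp only [det_mul]; ring
    _ ≤ (star B * B).det := mul_le_of_le_one_right hY.det_nonneg (hZ.det_le_one h1Z)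

end Matrix

lemma Dmat_isHermitian {n : ℕ} (lam : Fin n → ℝ) : (Dmat lam).IsHermitian := by
  simp [Dmat, IsHermitian, diagonal_conjTranspose]

lemma star_trace_Dmat_mul {n : ℕ} (lam : Fin n → ℝ) {A : Matrix (Fin n) (Fin n) ℂ}
    (hA : A.IsHermitian) : star (Dmat lam * A).trace = (Dmat lam * A).trace := by
  rw [← trace_conjTranspose, conjTranspose_mul, hA.eq, (Dmat_isHermitian lam).eq, trace_mul_comm]

lemma cent_isHermitian {n : ℕ} (lam : Fin n → ℝ) {A : Matrix (Fin n) (Fin n) ℂ}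
    (hA : A.IsHermitian) : (cent lam A).IsHermitian := by
  rw [cent, IsHermitian, conjTranspose_sub, conjTranspose_smul, conjTranspose_one,
    star_trace_Dmat_mul lam hA, hA.eq]

noncomputable def covFactor {n N : ℕ} (lam : Fin n → ℝ) (g : ℝ → ℝ → ℝ)
    (A : Fin N → Matrix (Fin n) (Fin n) ℂ) : Matrix (Fin n × Fin n) (Fin N) ℂ :=
  Matrix.of fun p i => (√(g (lam p.1) (lam p.2)) : ℂ) * cent lam (A i) p.1 p.2

lemma covM_eq_conjTranspose_mul_self {n N : ℕ} (lam : Fin n → ℝ) {g : ℝ → ℝ → ℝ}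
    {A : Fin N → Matrix (Fin n) (Fin n) ℂ} (hg : ∀ k l, 0 ≤ g (lam k) (lam l))
    (hA : ∀ i, (A i).IsHermitian) :
    covM lam g A = (covFactor lam g A)ᴴ * covFactor lam g A := by
  ext i j
  simp only [covM, covFactor, of_apply, mul_apply, conjTranspose_apply, Fintype.sum_prod_type]
  refine Finset.sum_congr rfl fun k _ => Finset.sum_congr rfl fun l _ => ?_
  have hsqrt : (√(g (lam k) (lam l)) : ℂ) * √(g (lam k) (lam l)) = g (lam k) (lam l) := by
    rw [← Complex.ofReal_mul, Real.mul_self_sqrt (hg k l)]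
  have hcent : starRingEnd ℂ (cent lam (A i) k l) = cent lam (A i) l k :=
    (cent_isHermitian lam (hA i)).apply l k
  rw [star_mul', Complex.star_def, Complex.conj_ofReal, hcent, ← hsqrt]
  ring

lemma covM_posSemidef {n N : ℕ} (lam : Fin n → ℝ) {g : ℝ → ℝ → ℝ}
    {A : Fin N → Matrix (Fin n) (Fin n) ℂ} (hg : ∀ k l, 0 ≤ g (lam k) (lam l))
    (hA : ∀ i, (A i).IsHermitian) : (covM lam g A).PosSemidef := by
  rw [covM_eq_conjTranspose_mul_self lam hg hA]
  exact posSemidef_conjTranspose_mul_self _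

lemma covM_sub {n N : ℕ} (lam : Fin n → ℝ) (g₁ g₂ : ℝ → ℝ → ℝ)
    (A : Fin N → Matrix (Fin n) (Fin n) ℂ) :
    covM lam g₂ A - covM lam g₁ A = covM lam (g₂ - g₁) A := by
  ext i j
  simp only [covM, Matrix.sub_apply, of_apply, ← Finset.sum_sub_distrib, Pi.sub_apply,
    Complex.ofReal_sub]
  refine Finset.sum_congr rfl fun k _ => Finset.sum_congr rfl fun l _ => ?_
  ring

lemma covM_sub_posSemidef {n N : ℕ} (lam : Fin n → ℝ) {g₁ g₂ : ℝ → ℝ → ℝ}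
    {A : Fin N → Matrix (Fin n) (Fin n) ℂ} (hg : ∀ k l, g₁ (lam k) (lam l) ≤ g₂ (lam k) (lam l))
    (hA : ∀ i, (A i).IsHermitian) : (covM lam g₂ A - covM lam g₁ A).PosSemidef := by
  rw [covM_sub]
  exact covM_posSemidef lam (fun k l => sub_nonneg.2 (hg k l)) hA

lemma IsFzero.nonneg {f : ℝ → ℝ} {f0 : ℝ} (h : IsFzero f f0) (hf : ∀ t, 0 < t → 0 ≤ f t) :
    0 ≤ f0 :=
  ge_of_tendsto h (eventually_nhdsWithin_of_forall hf)

lemma mfun_pos {f : ℝ → ℝ} (hf : ∀ t, 0 < t → 0 < f t) {x y : ℝ} (hx : 0 < x) (hy : 0 < y) :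
    0 < mfun f x y :=
  mul_pos hy (hf _ (div_pos hx hy))

lemma gas_nonneg {f : ℝ → ℝ} {f0 x y : ℝ} (hf0 : 0 ≤ f0) (hm : 0 ≤ mfun f x y) :
    0 ≤ gas f f0 x y := by
  unfold gas
  positivity

lemma gas_le_gs {f : ℝ → ℝ} {f0 x y : ℝ} (hf0 : 0 ≤ f0) (hm : 0 ≤ mfun f x y) (hx : 0 ≤ x)
    (hy : 0 ≤ y) : gas f f0 x y ≤ gs f f0 x y := by
  have hsq : (x - y) ^ 2 ≤ (x + y) ^ 2 := by nlinarith [mul_nonneg hx hy]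
  unfold gas gs
  gcongr

lemma gas_le_gas {f₁ f₂ : ℝ → ℝ} {f01 f02 x y : ℝ} (hy : 0 ≤ y)
    (h : f02 / f₂ (x / y) ≤ f01 / f₁ (x / y)) : gas f₂ f02 x y ≤ gas f₁ f01 x y := by
  have hgas : ∀ f f0, gas f f0 x y = (x - y) ^ 2 / (2 * y) * (f0 / f (x / y)) := by
    intro f f0
    rw [gas, mfun]
    ring
  rw [hgas, hgas]
  gcongr

theorem det_qCov_s_ge_det_qCov_as_general (n N : ℕ) (lam : Fin n → ℝ)
    (hlam : ∀ k, 0 < lam k)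
    (f₁ f₂ : ℝ → ℝ) (hf₁ : IsFop f₁) (hf₂ : IsFop f₂)
    (f01 f02 : ℝ) (hf01 : IsFzero f₁ f01) (hf02 : IsFzero f₂ f02)
    (hff : ∀ t : ℝ, 0 < t → f02 / f₂ t ≤ f01 / f₁ t)
    (A : Fin N → Matrix (Fin n) (Fin n) ℂ) (hA : ∀ a, (A a).IsHermitian) :
    (covM lam (gas f₂ f02) A).det.re ≤ (covM lam (gs f₁ f01) A).det.re := by
  have hf01_nonneg := hf01.nonneg fun t ht => (hf₁.pos t ht).le
  have hf02_nonneg := hf02.nonneg fun t ht => (hf₂.pos t ht).le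
  have hm {f} (hf : IsFop f) k l : 0 ≤ mfun f (lam k) (lam l) :=
    (mfun_pos hf.pos (hlam k) (hlam l)).le
  have hkernel k l : gas f₂ f02 (lam k) (lam l) ≤ gs f₁ f01 (lam k) (lam l) :=
    (gas_le_gas (hlam l).le (hff _ (div_pos (hlam k) (hlam l)))).trans
      (gas_le_gs hf01_nonneg (hm hf₁ k l) (hlam k).le (hlam l).le)
  have hX := covM_posSemidef lam (fun k l => gas_nonneg hf02_nonneg (hm hf₂ k l)) hA
  exact (Complex.le_def.1 (hX.det_le_det (covM_sub_posSemidef lam hkernel hA))).1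

/-- If `f₁(0)/f₁(t) ≥ f₂(0)/f₂(t)` for all `t > 0`, then `det(qCov^{s}_{D,f₁}) ≥ det(qCov^{as}_{D,f₂})`. -/
theorem det_qCov_s_ge_det_qCov_as (n N : ℕ) (lam : Fin n → ℝ)
    (hlam : ∀ k, 0 < lam k) (hsum : ∑ k, lam k = 1)
    (f₁ f₂ : ℝ → ℝ) (hf₁ : IsFop f₁) (hf₂ : IsFop f₂)
    (f01 f02 : ℝ) (hf01 : IsFzero f₁ f01) (hf02 : IsFzero f₂ f02)
    (hff : ∀ t : ℝ, 0 < t → f02 / f₂ t ≤ f01 / f₁ t)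
    (A : Fin N → Matrix (Fin n) (Fin n) ℂ) (hA : ∀ a, (A a).IsHermitian) :
    (covM lam (gas f₂ f02) A).det.re ≤ (covM lam (gs f₁ f01) A).det.re :=
  det_qCov_s_ge_det_qCov_as_general n N lam hlam f₁ f₂ hf₁ hf₂ f01 f02 hf01 hf02 hff A hA
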